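/- For every n ≥ 1 with odd part op(n) and 2-adic valuation k (so n = 2^k · op(n)), the monic integer polynomial \hat{t}(n,x) = 2T(n, x/2) factors as \hat{t}(n,x) = ∏_{d | op(n)} C(2^{k+1} d, x), where C(m,x) is the minimal polynomial of 2cos(π/m). -/

import Mathlib

/-!
For `m ≥ 2` let `P` be the minimal polynomial of `2 cos (π / m)` and `ζ = exp (i π / m)`, a
primitive `2m`-th root of unity with `ζ + ζ⁻¹ = 2 cos (π / m)`. Then `ζ` is a root of
`z ^ deg P * P (z + z⁻¹)`, so `Φ_{2m}` divides this monic polynomial of degree `2 deg P`; and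
`ℚ(2 cos (π / m))` is a real, hence proper, subfield of `ℚ(ζ)`, so `2 deg P ≤ φ(2m)`. Hence
`z ^ deg P * P (z + z⁻¹) = Φ_{2m}`, which shows that these minimal polynomials are pairwise
distinct and that `deg P = φ(2m) / 2`.

For `n = 2^k q` with `q` odd and `d ∣ q`, the angle `n π / (2^(k+1) d)` is an odd multiple of
`π / 2`, so `2 cos (π / (2^(k+1) d))` is a root of `t̂(n, x)` (Mathlib's `Chebyshev.C ℚ n`).
The product of the distinct irreducible factors `C(2^(k+1) d, x)` therefore divides `t̂(n, x)`;
both are monic and the product has degree `∑_{d ∣ q} 2^k φ(d) = n`, so they are equal.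
-/

open Polynomial Real

namespace Polynomial

section Joukowski

variable {R : Type*} [CommRing R]

/-- `z ^ deg P * P (z + z⁻¹)` as a polynomial in `z`, `z ↦ z + z⁻¹` being the Joukowski map. -/
noncomputable def joukowski (P : R[X]) : R[X] :=
  ∑ i ∈ Finset.range (P.natDegree + 1), C (P.coeff i) * X ^ (P.natDegree - i) * (X ^ 2 + 1) ^ i

lemma natDegree_joukowski_term_le (a : R) {d i : ℕ} (hi : i ≤ d) :
    (C a * X ^ (d - i) * (X ^ 2 + 1 : R[X]) ^ i).natDegree ≤ d + i := by
  have h : (X ^ 2 + 1 : R[X]).natDegree ≤ 2 := by compute_degree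
  calc _ ≤ 0 + (d - i) + i * 2 :=
        natDegree_mul_le_of_le (natDegree_mul_le_of_le (natDegree_C a).le (natDegree_X_pow_le _))
          (natDegree_pow_le_of_le i h)
    _ = d + i := by omega

lemma natDegree_joukowski_le (P : R[X]) : (joukowski P).natDegree ≤ 2 * P.natDegree :=
  natDegree_sum_le_of_forall_le _ _ fun i hi => by
    have hi := Finset.mem_range_succ_iff.mp hi
    exact (natDegree_joukowski_term_le _ hi).trans (by omega)

lemma Monic.joukowski {P : R[X]} (hP : P.Monic) : P.joukowski.Monic := by
  refine monic_of_natDegree_le_of_coeff_eq_one _ (natDegree_joukowski_le P) ?_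
  rw [Polynomial.joukowski, finsetSum_coeff, Finset.sum_eq_single P.natDegree]
  · nontriviality R
    have hm : ((X ^ 2 + 1 : R[X]) ^ P.natDegree).Monic := by monicity!
    have hd : ((X ^ 2 + 1 : R[X]) ^ P.natDegree).natDegree = 2 * P.natDegree := by
      compute_degree! <;> omega
    simpa [hP.coeff_natDegree, hd] using hm.coeff_natDegree
  · intro i hi hne
    have hi := Finset.mem_range_succ_iff.mp hi
    exact coeff_eq_zero_of_natDegree_lt ((natDegree_joukowski_term_le _ hi).trans_lt (by omega))
  · simp

lemma aeval_joukowski {L : Type*} [Field L] [Algebra R L] (P : R[X]) {z : L} (hz : z ≠ 0) :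
    aeval z P.joukowski = z ^ P.natDegree * aeval (z + z⁻¹) P := by
  rw [Polynomial.joukowski, map_sum, aeval_eq_sum_range, Finset.mul_sum]
  refine Finset.sum_congr rfl fun i hi => ?_
  have hz2 : z ^ 2 + 1 = z * (z + z⁻¹) := by field_simp
  have hpow : z ^ P.natDegree = z ^ (P.natDegree - i) * z ^ i := by
    rw [← pow_add, Nat.sub_add_cancel (Finset.mem_range_succ_iff.mp hi)]
  simp only [map_mul, map_pow, map_add, aeval_X, aeval_C, map_one, Algebra.smul_def]
  rw [hz2, hpow, mul_pow]
  ring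

end Joukowski

namespace Chebyshev

variable (R : Type*) [CommRing R]

lemma natDegree_C_le (n : ℕ) : (C R n).natDegree ≤ n := by
  induction n using Nat.twoStepInduction with
  | zero => simp
  | one => simpa using natDegree_X_le
  | more n h0 h1 =>
    push_cast at h1 ⊢
    rw [C_add_two]
    refine (natDegree_sub_le _ _).trans (max_le ?_ (by omega))
    exact (natDegree_mul_le_of_le natDegree_X_le h1).trans (by omega)

lemma coeff_C_self {n : ℕ} (hn : n ≠ 0) : (C R n).coeff n = 1 := by
  induction n using Nat.twoStepInduction with
  | zero => contradiction
  | one => simp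
  | more n _ h1 =>
    push_cast at h1 ⊢
    rw [C_add_two, coeff_sub, show n + 2 = (n + 1) + 1 from rfl, coeff_X_mul, h1 n.succ_ne_zero,
      coeff_eq_zero_of_natDegree_lt ((natDegree_C_le R n).trans_lt (by omega)), sub_zero]

lemma monic_C {n : ℕ} (hn : n ≠ 0) : (C R n).Monic :=
  monic_of_natDegree_le_of_coeff_eq_one n (natDegree_C_le R n) (coeff_C_self R hn)

lemma minpoly_two_mul_cos_dvd_C_mul_odd {m e : ℕ} (hm : m ≠ 0) (he : Odd e) :
    minpoly ℚ (2 * Real.cos (π / (2 * m : ℕ))) ∣ C ℚ (m * e : ℕ) := by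
  refine minpoly.dvd ℚ _ ?_
  rw [aeval_C, C_two_mul_real_cos, Real.cos_eq_zero_iff.mpr, mul_zero]
  obtain ⟨j, rfl⟩ := he
  refine ⟨j, ?_⟩
  push_cast
  field_simp

end Chebyshev

end Polynomial

lemma minpoly.isCoprime_of_ne {K L : Type*} [Field K] [CommRing L] [IsDomain L] [Algebra K L]
    {x y : L} (hx : IsIntegral K x) (hy : IsIntegral K y) (h : minpoly K x ≠ minpoly K y) :
    IsCoprime (minpoly K x) (minpoly K y) := by
  rw [(minpoly.irreducible hx).coprime_iff_not_dvd]
  exact fun hdvd => h <| eq_of_monic_of_associated (minpoly.monic hx) (minpoly.monic hy) <|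
    (minpoly.irreducible hx).associated_of_dvd (minpoly.irreducible hy) hdvd

lemma IntermediateField.two_mul_finrank_le_of_lt {K L : Type*} [Field K] [Field L] [Algebra K L]
    {F E : IntermediateField K L} [FiniteDimensional K E] (h : F < E) :
    2 * Module.finrank K F ≤ Module.finrank K E := by
  obtain ⟨c, hc⟩ := finrank_dvd_of_le_right h.le
  have hne : Module.finrank K F ≠ Module.finrank K E := fun he =>
    h.ne (eq_of_le_of_finrank_eq h.le he)
  have hpos : 0 < Module.finrank K E := Module.finrank_pos
  rcases c with _ | _ | c
  · omega
  · simp_all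
  · rw [hc]; nlinarith

lemma Nat.totient_two_pow_succ_mul_of_odd (k : ℕ) {d : ℕ} (hd : Odd d) :
    (2 ^ (k + 1) * d).totient = 2 ^ k * d.totient := by
  rw [Nat.totient_mul ((Nat.coprime_two_left.mpr hd).pow_left _),
    Nat.totient_prime_pow_succ Nat.prime_two]
  ring

namespace Complex

lemma ofReal_two_mul_cos (θ : ℝ) :
    ((2 * Real.cos θ : ℝ) : ℂ) = exp (θ * I) + (exp (θ * I))⁻¹ := by
  rw [← exp_neg, ← neg_mul, ofReal_mul, ofReal_cos, cos]
  push_cast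
  ring

lemma isPrimitiveRoot_exp_pi_div {m : ℕ} (hm : m ≠ 0) :
    IsPrimitiveRoot (exp (↑(π / m) * I)) (2 * m) := by
  convert isPrimitiveRoot_exp (2 * m) (by omega) using 2
  push_cast
  field_simp

lemma exp_pi_div_mul_I_notMem_range_ofReal {m : ℕ} (hm : 2 ≤ m) :
    exp (↑(π / m) * I) ∉ Set.range ((↑) : ℝ → ℂ) := by
  rintro ⟨r, hr⟩
  have hsin : 0 < Real.sin (π / m) := by
    apply Real.sin_pos_of_pos_of_lt_pi (by positivity)
    rw [div_lt_iff₀ (by positivity)]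
    have : (1 : ℝ) < m := by exact_mod_cast hm
    nlinarith [pi_pos]
  have := congrArg im hr
  rw [ofReal_im, exp_ofReal_mul_I_im] at this
  linarith

lemma minpoly_ofReal (x : ℝ) : minpoly ℚ (x : ℂ) = minpoly ℚ x :=
  minpoly.algHom_eq (ofRealAm.restrictScalars ℚ) ofReal_injective x

lemma isIntegral_ofReal_iff {x : ℝ} : IsIntegral ℚ (x : ℂ) ↔ IsIntegral ℚ x :=
  isIntegral_algHom_iff (ofRealAm.restrictScalars ℚ) ofReal_injective

end Complex

open Complex in
lemma isIntegral_two_mul_cos_pi_div {m : ℕ} (hm : m ≠ 0) :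
    IsIntegral ℚ (2 * Real.cos (π / m)) := by
  have hζ := (isPrimitiveRoot_exp_pi_div hm).isIntegral (by omega) |>.tower_top (A := ℚ)
  rw [← isIntegral_ofReal_iff, ofReal_two_mul_cos]
  exact hζ.add hζ.inv

open Complex IntermediateField in
lemma two_mul_natDegree_minpoly_two_mul_cos_le {m : ℕ} (hm : 2 ≤ m) :
    2 * (minpoly ℚ (2 * Real.cos (π / m))).natDegree ≤ (2 * m).totient := by
  set ζ := exp (↑(π / m) * I)
  have hζ := isPrimitiveRoot_exp_pi_div (by omega : m ≠ 0)
  have hζint : IsIntegral ℚ ζ := (hζ.isIntegral (by omega)).tower_top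
  have hα : ((2 * Real.cos (π / m) : ℝ) : ℂ) = ζ + ζ⁻¹ := ofReal_two_mul_cos _
  have : FiniteDimensional ℚ ℚ⟮ζ⟯ := adjoin.finiteDimensional hζint
  have hlt : ℚ⟮((2 * Real.cos (π / m) : ℝ) : ℂ)⟯ < ℚ⟮ζ⟯ := by
    refine lt_of_le_of_ne ?_ fun h => exp_pi_div_mul_I_notMem_range_ofReal hm ?_
    · rw [adjoin_simple_le_iff, hα]
      exact add_mem (mem_adjoin_simple_self ℚ ζ) (inv_mem (mem_adjoin_simple_self ℚ ζ))
    · have hreal : ℚ⟮((2 * Real.cos (π / m) : ℝ) : ℂ)⟯ ≤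
          (ofRealAm.restrictScalars ℚ).fieldRange := adjoin_simple_le_iff.mpr ⟨_, rfl⟩
      exact hreal (h ▸ mem_adjoin_simple_self ℚ ζ)
  have := two_mul_finrank_le_of_lt hlt
  rwa [adjoin.finrank hζint, ← cyclotomic_eq_minpoly_rat hζ (by omega), natDegree_cyclotomic,
    adjoin.finrank (isIntegral_ofReal_iff.mpr (isIntegral_two_mul_cos_pi_div (by omega))),
    minpoly_ofReal] at this

open Complex in
lemma joukowski_minpoly_two_mul_cos_pi_div {m : ℕ} (hm : 2 ≤ m) :
    (minpoly ℚ (2 * Real.cos (π / m))).joukowski = cyclotomic (2 * m) ℚ := by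
  have hint := isIntegral_two_mul_cos_pi_div (by omega : m ≠ 0)
  have hζ := isPrimitiveRoot_exp_pi_div (by omega : m ≠ 0)
  have hdvd : cyclotomic (2 * m) ℚ ∣ (minpoly ℚ (2 * Real.cos (π / m))).joukowski := by
    rw [cyclotomic_eq_minpoly_rat hζ (by omega)]
    refine minpoly.dvd ℚ _ ?_
    rw [aeval_joukowski _ (hζ.ne_zero (by omega)), ← ofReal_two_mul_cos, ← minpoly_ofReal,
      minpoly.aeval, mul_zero]
  refine eq_of_monic_of_dvd_of_natDegree_le (cyclotomic.monic _ ℚ) (minpoly.monic hint).joukowski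
    hdvd ?_
  rw [natDegree_cyclotomic]
  exact (natDegree_joukowski_le _).trans (two_mul_natDegree_minpoly_two_mul_cos_le hm)

lemma two_mul_natDegree_minpoly_two_mul_cos {m : ℕ} (hm : 2 ≤ m) :
    2 * (minpoly ℚ (2 * Real.cos (π / m))).natDegree = (2 * m).totient := by
  refine (two_mul_natDegree_minpoly_two_mul_cos_le hm).antisymm ?_
  rw [← natDegree_cyclotomic (2 * m) ℚ, ← joukowski_minpoly_two_mul_cos_pi_div hm]
  exact natDegree_joukowski_le _

lemma eq_of_minpoly_two_mul_cos_pi_div_eq {m₁ m₂ : ℕ} (h₁ : 2 ≤ m₁) (h₂ : 2 ≤ m₂)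
    (h : minpoly ℚ (2 * Real.cos (π / m₁)) = minpoly ℚ (2 * Real.cos (π / m₂))) : m₁ = m₂ := by
  have := congrArg joukowski h
  rw [joukowski_minpoly_two_mul_cos_pi_div h₁, joukowski_minpoly_two_mul_cos_pi_div h₂] at this
  simpa using cyclotomic_injective this

theorem Polynomial.Chebyshev.C_two_pow_mul_odd_eq_prod_minpoly (k : ℕ) {q : ℕ} (hq : Odd q) :
    C ℚ (2 ^ k * q : ℕ) =
      ∏ d ∈ q.divisors, minpoly ℚ (2 * Real.cos (π / (2 * (2 ^ k * d) : ℕ))) := by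
  set f : ℕ → ℚ[X] := fun d => minpoly ℚ (2 * Real.cos (π / (2 * (2 ^ k * d) : ℕ)))
  have hm : ∀ d ∈ q.divisors, 2 ≤ 2 * (2 ^ k * d) := fun d hd =>
    Nat.le_mul_of_pos_right 2 (Nat.mul_pos (Nat.two_pow_pos k) (Nat.pos_of_mem_divisors hd))
  have hint : ∀ d ∈ q.divisors, IsIntegral ℚ (2 * Real.cos (π / (2 * (2 ^ k * d) : ℕ))) :=
    fun d hd => isIntegral_two_mul_cos_pi_div (by have := hm d hd; omega)
  have hdvd : ∀ d ∈ q.divisors, f d ∣ C ℚ (2 ^ k * q : ℕ) := by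
    intro d hd
    obtain ⟨e, he⟩ := Nat.dvd_of_mem_divisors hd
    rw [he, ← mul_assoc]
    exact minpoly_two_mul_cos_dvd_C_mul_odd (by have := hm d hd; omega)
      (Nat.Odd.of_mul_right (he ▸ hq))
  have hinj : Set.InjOn f q.divisors := fun d₁ h₁ d₂ h₂ h => by
    simpa using eq_of_minpoly_two_mul_cos_pi_div_eq (hm _ h₁) (hm _ h₂) h
  have hcop : (q.divisors : Set ℕ).Pairwise (Function.onFun IsCoprime f) :=
    fun d₁ h₁ d₂ h₂ hne =>
      minpoly.isCoprime_of_ne (hint d₁ h₁) (hint d₂ h₂) (hinj.ne h₁ h₂ hne)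
  have hdeg : ∀ d ∈ q.divisors, (f d).natDegree = 2 ^ k * d.totient := fun d hd => by
    have h := two_mul_natDegree_minpoly_two_mul_cos (hm d hd)
    rw [show 2 * (2 * (2 ^ k * d)) = 2 ^ (k + 1 + 1) * d by ring,
      Nat.totient_two_pow_succ_mul_of_odd _ (hq.of_dvd_nat (Nat.dvd_of_mem_divisors hd)),
      pow_succ] at h
    simp only [f]
    linarith
  refine eq_of_monic_of_dvd_of_natDegree_le
    (monic_prod_of_monic _ _ fun d hd => minpoly.monic (hint d hd)) (monic_C ℚ ?_)
    (Finset.prod_dvd_of_coprime hcop hdvd) ?_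
  · exact Nat.mul_ne_zero (by positivity) hq.pos.ne'
  · rw [natDegree_prod _ _ fun d hd => minpoly.ne_zero (hint d hd), Finset.sum_congr rfl hdeg,
      ← Finset.mul_sum, Nat.sum_totient]
    exact natDegree_C_le ℚ _

/-- For n ≥ 1 with n = 2^k·op(n), op(n) odd, the monic integer polynomial
t̂(n,x) = 2T(n,x/2) factors as ∏_{d | op(n)} C(2^{k+1}d, x), where C(m,x) is the
minimal polynomial of 2cos(π/m). -/
theorem that_factorization (n : ℕ) (hn : 1 ≤ n) :
    (2 : Polynomial ℝ) * (Polynomial.Chebyshev.T ℝ (n : ℤ)).comp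
        (Polynomial.C (2 : ℝ)⁻¹ * Polynomial.X) =
      ∏ d ∈ (n / 2 ^ (n.factorization 2)).divisors,
        (minpoly ℚ ((2 : ℝ) * Real.cos (π / (2 ^ (n.factorization 2 + 1) * d)))).map
          (algebraMap ℚ ℝ) := by
  have hq : Odd (n / 2 ^ n.factorization 2) :=
    Nat.odd_iff.mpr (Nat.two_dvd_ne_zero.mp (Nat.not_dvd_ordCompl Nat.prime_two (by omega)))
  have h := Chebyshev.C_two_pow_mul_odd_eq_prod_minpoly (n.factorization 2) hq
  rw [Nat.ordProj_mul_ordCompl_eq_self] at h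
  rw [← invOf_eq_inv, ← Chebyshev.C_eq_two_mul_T_comp_half_mul_X,
    ← Chebyshev.map_C (algebraMap ℚ ℝ), h, Polynomial.map_prod]
  refine Finset.prod_congr rfl fun d _ => ?_
  push_cast
  ring_nf
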